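/- arXiv:2601.08029 — 11 statements merged into one kernel-verified Lean document; each statement's English description precedes it below -/
import Mathlib

section
/- Let ψ : ℝ → EuclideanSpace ℂ (Fin d) be a curve of unit vectors (‖ψ(α)‖ = 1 for all α) that is differentiable at α₀, and let (v_i)_{i=1}^d be an orthonormal basis of ℂ^d such that the inner product ⟨v_i, ψ(α)⟩ is a real number for every i and every α. Define the measurement probabilities p_i(α) = |⟨v_i, ψ(α)⟩|², and assume p_i(α₀) ≠ 0 for every i. Then the classical Fisher information equals the quantum Fisher information: Σ_{i=1}^d (p_i'(α₀))² / p_i(α₀) = 4 ‖ψ'(α₀)‖², where ψ'(α₀) is the derivative of ψ at α₀ and p_i' is the derivative of p_i. -/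
/-! With real amplitudes `cᵢ(α) = ⟪vᵢ, ψ(α)⟫`, each outcome probability is `pᵢ = cᵢ²`,
so `pᵢ' = 2 cᵢ cᵢ'` and `(pᵢ')² / pᵢ = 4 cᵢ'²`. The derivative `cᵢ' = ⟪vᵢ, ψ'⟫` of a real
curve is again real, so `cᵢ'² = ‖⟪vᵢ, ψ'⟫‖²`, and summing over the basis gives `4 ‖ψ'‖²`
by Parseval. -/

theorem HasDerivAt.im_eq_zero_of_forall_im_eq_zero {f : ℝ → ℂ} {f' : ℂ} {x : ℝ}
    (hf : HasDerivAt f f' x) (hreal : ∀ t, (f t).im = 0) : f'.im = 0 := by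
  have him : HasDerivAt (fun t => (f t).im) f'.im x :=
    Complex.imCLM.hasFDerivAt.comp_hasDerivAt x hf
  simp only [hreal] at him
  exact him.unique (hasDerivAt_const x 0)

theorem sq_deriv_sq_div_sq {g : ℝ → ℝ} {g' x : ℝ} (hg : HasDerivAt g g' x)
    (hx : g x ≠ 0) :
    deriv (fun t => g t ^ 2) x ^ 2 / g x ^ 2 = 4 * g' ^ 2 := by
  rw [(hg.fun_pow 2).deriv]
  field_simp
  ring

theorem sq_deriv_sq_norm_div_sq_norm_of_im_eq_zero {c : ℝ → ℂ} {c' : ℂ} {x : ℝ}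
    (hc : HasDerivAt c c' x) (hreal : ∀ t, (c t).im = 0) (hx : c x ≠ 0) :
    deriv (fun t => ‖c t‖ ^ 2) x ^ 2 / ‖c x‖ ^ 2 = 4 * ‖c'‖ ^ 2 := by
  have hsq : ∀ {z : ℂ}, z.im = 0 → ‖z‖ ^ 2 = z.re ^ 2 := fun hz => by
    rw [← Complex.abs_re_eq_norm.2 hz, sq_abs]
  have hre : HasDerivAt (fun t => (c t).re) c'.re x :=
    Complex.reCLM.hasFDerivAt.comp_hasDerivAt x hc
  have hx_re : (c x).re ≠ 0 := fun h => hx (Complex.ext h (hreal x))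
  simp only [hsq (hreal _), hsq (hc.im_eq_zero_of_forall_im_eq_zero hreal)]
  exact sq_deriv_sq_div_sq hre hx_re

theorem classical_fisher_eq_quantum_fisher_of_real_basis_general
    {d : ℕ} (ψ : ℝ → EuclideanSpace ℂ (Fin d)) (α₀ : ℝ)
    (ψ' : EuclideanSpace ℂ (Fin d)) (hψ : HasDerivAt ψ ψ' α₀)
    (b : OrthonormalBasis (Fin d) ℂ (EuclideanSpace ℂ (Fin d)))
    (hreal : ∀ (i : Fin d) (α : ℝ), (inner ℂ (b i) (ψ α) : ℂ).im = 0)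
    (p : Fin d → ℝ → ℝ)
    (hp : ∀ (i : Fin d) (α : ℝ), p i α = ‖(inner ℂ (b i) (ψ α) : ℂ)‖ ^ 2)
    (hp0 : ∀ i : Fin d, p i α₀ ≠ 0) :
    ∑ i : Fin d, (deriv (p i) α₀) ^ 2 / p i α₀ = 4 * ‖ψ'‖ ^ 2 := by
  have hamp : ∀ i, HasDerivAt (fun α => inner ℂ (b i) (ψ α)) (inner ℂ (b i) ψ') α₀ :=
    fun i => by simpa using (hasDerivAt_const α₀ (b i)).inner ℂ hψ
  have hterm : ∀ i, deriv (p i) α₀ ^ 2 / p i α₀ = 4 * ‖(inner ℂ (b i) ψ' : ℂ)‖ ^ 2 := by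
    intro i
    have hamp0 : inner ℂ (b i) (ψ α₀) ≠ 0 := fun h => hp0 i (by simp [hp, h])
    rw [show p i = fun α => ‖(inner ℂ (b i) (ψ α) : ℂ)‖ ^ 2 from funext (hp i)]
    exact sq_deriv_sq_norm_div_sq_norm_of_im_eq_zero (hamp i) (hreal i) hamp0
  rw [Finset.sum_congr rfl fun i _ => hterm i, ← Finset.mul_sum, b.sum_sq_norm_inner_right]

/-- Observation 1: measuring a real family of pure states in a real orthonormal basis
saturates the quantum Fisher information. -/
theorem classical_fisher_eq_quantum_fisher_of_real_basis
    {d : ℕ} (ψ : ℝ → EuclideanSpace ℂ (Fin d)) (α₀ : ℝ)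
    (ψ' : EuclideanSpace ℂ (Fin d)) (hψ : HasDerivAt ψ ψ' α₀)
    (hnorm : ∀ α : ℝ, ‖ψ α‖ = 1)
    (b : OrthonormalBasis (Fin d) ℂ (EuclideanSpace ℂ (Fin d)))
    (hreal : ∀ (i : Fin d) (α : ℝ), (inner ℂ (b i) (ψ α) : ℂ).im = 0)
    (p : Fin d → ℝ → ℝ)
    (hp : ∀ (i : Fin d) (α : ℝ), p i α = ‖(inner ℂ (b i) (ψ α) : ℂ)‖ ^ 2)
    (hp0 : ∀ i : Fin d, p i α₀ ≠ 0) :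
    ∑ i : Fin d, (deriv (p i) α₀) ^ 2 / p i α₀ = 4 * ‖ψ'‖ ^ 2 :=
  classical_fisher_eq_quantum_fisher_of_real_basis_general ψ α₀ ψ' hψ b hreal p hp hp0
end

section
/- Let (v_i)_{i=1}^d be an orthonormal basis of EuclideanSpace ℂ (Fin d), and let ψ, w ∈ ℂ^d be vectors such that ⟨v_i, ψ⟩ ≠ 0 for every i. Then Σ_{i=1}^d ( 2·Re(⟨v_i, w⟩ · conj(⟨v_i, ψ⟩)) )² / |⟨v_i, ψ⟩|² ≤ 4‖w‖². -/
/-! Bounding the real part by the modulus, the `i`-th summand is at most `4 |⟨v i, w⟩|²`,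
and by Parseval these bounds sum to `4 ‖w‖²`. -/

open ComplexConjugate

theorem Complex.sq_two_mul_re_mul_conj_div_sq_norm_le (z c : ℂ) :
    (2 * (z * conj c).re) ^ 2 / ‖c‖ ^ 2 ≤ 4 * ‖z‖ ^ 2 := by
  have h_re : |(z * conj c).re| ≤ ‖z‖ * ‖c‖ := by
    simpa only [norm_mul, Complex.norm_conj] using Complex.abs_re_le_norm (z * conj c)
  have h_sq : (z * conj c).re ^ 2 ≤ (‖z‖ * ‖c‖) ^ 2 :=
    sq_le_sq' (abs_le.mp h_re).1 (abs_le.mp h_re).2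
  refine div_le_of_le_mul₀ (by positivity) (by positivity) ?_
  calc (2 * (z * conj c).re) ^ 2 = 4 * (z * conj c).re ^ 2 := by ring
    _ ≤ 4 * (‖z‖ * ‖c‖) ^ 2 := by gcongr
    _ = 4 * ‖z‖ ^ 2 * ‖c‖ ^ 2 := by ring

theorem classical_fisher_le_quantum_fisher_general
    {d : ℕ} (b : OrthonormalBasis (Fin d) ℂ (EuclideanSpace ℂ (Fin d)))
    (ψ w : EuclideanSpace ℂ (Fin d)) :
    ∑ i : Fin d,
        (2 * ((inner ℂ (b i) w : ℂ) * (starRingEnd ℂ) (inner ℂ (b i) ψ : ℂ)).re) ^ 2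
          / ‖(inner ℂ (b i) ψ : ℂ)‖ ^ 2
      ≤ 4 * ‖w‖ ^ 2 :=
  calc _ ≤ ∑ i, 4 * ‖(inner ℂ (b i) w : ℂ)‖ ^ 2 :=
        Finset.sum_le_sum fun i _ => Complex.sq_two_mul_re_mul_conj_div_sq_norm_le _ _
    _ = 4 * ‖w‖ ^ 2 := by rw [← Finset.mul_sum, b.sum_sq_norm_inner_right]

/-- The classical Fisher information of a measurement in an orthonormal basis is bounded
by the quantum Fisher information: for an orthonormal basis `(v i)` and vectors `ψ`, `w`
with `⟨v i, ψ⟩ ≠ 0` for all `i`, one has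
`Σ i (2 Re(⟨v i, w⟩ conj ⟨v i, ψ⟩))² / |⟨v i, ψ⟩|² ≤ 4 ‖w‖²`. -/
theorem classical_fisher_le_quantum_fisher
    {d : ℕ} (b : OrthonormalBasis (Fin d) ℂ (EuclideanSpace ℂ (Fin d)))
    (ψ w : EuclideanSpace ℂ (Fin d))
    (hne : ∀ i : Fin d, (inner ℂ (b i) ψ : ℂ) ≠ 0) :
    ∑ i : Fin d,
        (2 * ((inner ℂ (b i) w : ℂ) * (starRingEnd ℂ) (inner ℂ (b i) ψ : ℂ)).re) ^ 2
          / ‖(inner ℂ (b i) ψ : ℂ)‖ ^ 2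
      ≤ 4 * ‖w‖ ^ 2 :=
  classical_fisher_le_quantum_fisher_general b ψ w
end

section
/- Let p₁ : ℝ → ℝ be differentiable at α with 0 < p₁(α) < 1, set p₂ = 1 − p₁, and let λ₁ ≠ λ₂ be real numbers. Define the expectation E(α) = λ₁ p₁(α) + λ₂ p₂(α) and the variance V(α) = λ₁² p₁(α) + λ₂² p₂(α) − E(α)². If p₁'(α) ≠ 0, then V(α) / (E'(α))² = 1 / ( (p₁'(α))²/p₁(α) + (p₁'(α))²/p₂(α) ), i.e. the ratio of variance to squared expectation-derivative equals the reciprocal of the classical Fisher information, independently of the eigenvalues λ₁, λ₂. -/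
/-!
Writing `p₂ = 1 - p₁`, the expectation is `E = (λ₁ - λ₂) p₁ + λ₂`, so `E' = (λ₁ - λ₂) p₁'`, while the
variance of the two-point distribution is `(λ₁ - λ₂)² p₁ p₂`. Their ratio `p₁ p₂ / p₁'²` no longer
involves the eigenvalues and is the reciprocal of `p₁'²/p₁ + p₁'²/p₂ = p₁'² / (p₁ p₂)`.
-/

theorem two_point_variance {R : Type*} [CommRing R] (l₁ l₂ p : R) :
    l₁ ^ 2 * p + l₂ ^ 2 * (1 - p) - (l₁ * p + l₂ * (1 - p)) ^ 2 = (l₁ - l₂) ^ 2 * (p * (1 - p)) := by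
  ring

theorem div_add_div_one_sub {K : Type*} [Field K] (a p : K) (hp : p ≠ 0) (hq : 1 - p ≠ 0) :
    a / p + a / (1 - p) = a / (p * (1 - p)) := by
  rw [div_add_div _ _ hp hq]
  congr 1
  ring

theorem HasDerivAt.two_point_expectation {𝕜 : Type*} [NontriviallyNormedField 𝕜] {p : 𝕜 → 𝕜}
    {p' α : 𝕜} (hp : HasDerivAt p p' α) (l₁ l₂ : 𝕜) :
    HasDerivAt (fun β => l₁ * p β + l₂ * (1 - p β)) ((l₁ - l₂) * p') α := by
  have h_eq : (fun β => l₁ * p β + l₂ * (1 - p β)) = fun β => (l₁ - l₂) * p β + l₂ :=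
    funext fun β => by ring
  exact h_eq ▸ (hp.const_mul (l₁ - l₂)).add_const l₂

theorem two_outcome_saturates_classical_cramer_rao_general
    (p₁ p₂ : ℝ → ℝ) (α : ℝ) (p₁' : ℝ) (hd : HasDerivAt p₁ p₁' α)
    (h0 : 0 < p₁ α) (h1 : p₁ α < 1)
    (hp₂ : ∀ β : ℝ, p₂ β = 1 - p₁ β)
    (lam₁ lam₂ : ℝ) (hlam : lam₁ ≠ lam₂)
    (E V : ℝ → ℝ)
    (hE : ∀ β : ℝ, E β = lam₁ * p₁ β + lam₂ * p₂ β)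
    (hV : ∀ β : ℝ, V β = lam₁ ^ 2 * p₁ β + lam₂ ^ 2 * p₂ β - (E β) ^ 2) :
    V α / (deriv E α) ^ 2 = 1 / (p₁' ^ 2 / p₁ α + p₁' ^ 2 / p₂ α) := by
  have hE' : HasDerivAt E ((lam₁ - lam₂) * p₁') α := by
    have hE_eq : E = fun β => lam₁ * p₁ β + lam₂ * (1 - p₁ β) := funext fun β => by rw [hE, hp₂]
    exact hE_eq ▸ hd.two_point_expectation lam₁ lam₂
  have hlam' : (lam₁ - lam₂) ^ 2 ≠ 0 := pow_ne_zero 2 (sub_ne_zero.mpr hlam)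
  rw [hE'.deriv, hV, hE, hp₂, two_point_variance,
    div_add_div_one_sub _ _ h0.ne' (sub_ne_zero.mpr h1.ne'), one_div_div, mul_pow,
    mul_div_mul_left _ _ hlam']

/-- Observation 2: for a two-outcome observable, the ratio of the variance to the squared
derivative of the expectation equals the reciprocal of the classical Fisher information,
independently of the two eigenvalues. -/
theorem two_outcome_saturates_classical_cramer_rao
    (p₁ p₂ : ℝ → ℝ) (α : ℝ) (p₁' : ℝ) (hd : HasDerivAt p₁ p₁' α)
    (h0 : 0 < p₁ α) (h1 : p₁ α < 1)
    (hp₂ : ∀ β : ℝ, p₂ β = 1 - p₁ β)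
    (lam₁ lam₂ : ℝ) (hlam : lam₁ ≠ lam₂)
    (E V : ℝ → ℝ)
    (hE : ∀ β : ℝ, E β = lam₁ * p₁ β + lam₂ * p₂ β)
    (hV : ∀ β : ℝ, V β = lam₁ ^ 2 * p₁ β + lam₂ ^ 2 * p₂ β - (E β) ^ 2)
    (hp' : p₁' ≠ 0) :
    V α / (deriv E α) ^ 2 = 1 / (p₁' ^ 2 / p₁ α + p₁' ^ 2 / p₂ α) :=
  two_outcome_saturates_classical_cramer_rao_general p₁ p₂ α p₁' hd h0 h1 hp₂ lam₁ lam₂ hlam E V hE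
    hV
end

section
/- Let ψ : ℝ → EuclideanSpace ℝ (Fin 2) be a curve of unit vectors (‖ψ(α)‖ = 1 for all α) differentiable at α₀, let (v₁, v₂) be an orthonormal basis of ℝ², and let λ₁ ≠ λ₂ be real numbers. Define p_i(α) = ⟨v_i, ψ(α)⟩², E(α) = λ₁p₁(α) + λ₂p₂(α), and V(α) = λ₁²p₁(α) + λ₂²p₂(α) − E(α)². If p₁(α₀) ≠ 0, p₂(α₀) ≠ 0, and p₁'(α₀) ≠ 0, then V(α₀)/(E'(α₀))² = 1/(4‖ψ'(α₀)‖²), i.e. the observable saturates the quantum Cramér–Rao bound. -/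
/-!
Write `cᵢ = ⟪bᵢ, ψ⟫` and `dᵢ = ⟪bᵢ, ψ'⟫`. Since `p₀ + p₁ = ‖ψ‖² = 1`, the variance of the
two-outcome observable is `(λ₁ - λ₂)² p₀ p₁` and `E' = (λ₁ - λ₂) p₀'`. Differentiating
`p₀ + p₁ = 1` gives `c₀d₀ + c₁d₁ = 0`, so in the plane `(d₀, d₁)` is a multiple of `(-c₁, c₀)`;
this yields `p₀'² = 4 p₀ p₁ ‖ψ'‖²`, i.e. the classical Fisher information `p₀'² / (p₀ p₁)` of the
measurement equals the quantum Fisher information `4‖ψ'‖²`.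
-/

open scoped RealInnerProductSpace

section

variable {F : Type*} [NormedAddCommGroup F] [InnerProductSpace ℝ F]

theorem OrthonormalBasis.inner_sq_add_inner_sq (b : OrthonormalBasis (Fin 2) ℝ F) (x : F) :
    ⟪b 0, x⟫ ^ 2 + ⟪b 1, x⟫ ^ 2 = ‖x‖ ^ 2 := by
  simpa only [Fin.sum_univ_two] using b.sum_sq_inner_right x

theorem HasDerivAt.inner_const_left_sq {ψ : ℝ → F} {ψ' : F} {t : ℝ} (hψ : HasDerivAt ψ ψ' t)
    (v : F) :
    HasDerivAt (fun s => ⟪v, ψ s⟫ ^ 2) (2 * ⟪v, ψ t⟫ * ⟪v, ψ'⟫) t := by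
  have hcoord : HasDerivAt (fun s => ⟪v, ψ s⟫) ⟪v, ψ'⟫ t :=
    (innerSL ℝ v).hasFDerivAt.comp_hasDerivAt t hψ
  simpa only [Nat.cast_ofNat, Nat.add_one_sub_one, pow_one] using hcoord.fun_pow 2

end

theorem two_outcome_variance_eq {p₀ p₁ : ℝ} (hp : p₀ + p₁ = 1) (l₁ l₂ : ℝ) :
    l₁ ^ 2 * p₀ + l₂ ^ 2 * p₁ - (l₁ * p₀ + l₂ * p₁) ^ 2 = (l₁ - l₂) ^ 2 * (p₀ * p₁) := by
  obtain rfl : p₁ = 1 - p₀ := by linarith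
  ring

theorem real_two_dim_saturates_quantum_cramer_rao_general
    (ψ : ℝ → EuclideanSpace ℝ (Fin 2)) (α₀ : ℝ)
    (ψ' : EuclideanSpace ℝ (Fin 2)) (hψ : HasDerivAt ψ ψ' α₀)
    (hnorm : ∀ α : ℝ, ‖ψ α‖ = 1)
    (b : OrthonormalBasis (Fin 2) ℝ (EuclideanSpace ℝ (Fin 2)))
    (lam₁ lam₂ : ℝ) (hlam : lam₁ ≠ lam₂)
    (p : Fin 2 → ℝ → ℝ)
    (hp : ∀ (i : Fin 2) (α : ℝ), p i α = (inner ℝ (b i) (ψ α) : ℝ) ^ 2)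
    (E V : ℝ → ℝ)
    (hE : ∀ α : ℝ, E α = lam₁ * p 0 α + lam₂ * p 1 α)
    (hV : ∀ α : ℝ, V α = lam₁ ^ 2 * p 0 α + lam₂ ^ 2 * p 1 α - (E α) ^ 2)
    (hp' : deriv (p 0) α₀ ≠ 0) :
    V α₀ / (deriv E α₀) ^ 2 = 1 / (4 * ‖ψ'‖ ^ 2) := by
  set c : Fin 2 → ℝ := fun i => ⟪b i, ψ α₀⟫
  set d : Fin 2 → ℝ := fun i => ⟪b i, ψ'⟫
  have hsum (α : ℝ) : p 0 α + p 1 α = 1 := by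
    rw [hp, hp, b.inner_sq_add_inner_sq, hnorm, one_pow]
  have hderiv (i : Fin 2) : HasDerivAt (p i) (2 * c i * d i) α₀ := by
    simpa only [← funext (hp i)] using hψ.inner_const_left_sq (b i)
  have horth : c 0 * d 0 + c 1 * d 1 = 0 := by
    have hconst := (hderiv 0).add (hderiv 1)
    rw [show p 0 + p 1 = fun _ => 1 from funext hsum] at hconst
    linarith [hconst.unique (hasDerivAt_const α₀ 1)]
  have hdE : deriv E α₀ = (lam₁ - lam₂) * deriv (p 0) α₀ := by
    have hE' : HasDerivAt E (lam₁ * (2 * c 0 * d 0) + lam₂ * (2 * c 1 * d 1)) α₀ := by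
      rw [funext hE]
      exact ((hderiv 0).const_mul lam₁).add ((hderiv 1).const_mul lam₂)
    rw [hE'.deriv, (hderiv 0).deriv]
    linear_combination 2 * lam₂ * horth
  have hV₀ : V α₀ = (lam₁ - lam₂) ^ 2 * (p 0 α₀ * p 1 α₀) := by
    rw [hV, hE]
    exact two_outcome_variance_eq (hsum α₀) lam₁ lam₂
  -- `(d₀, d₁)` is orthogonal to the unit vector `(c₀, c₁)`, hence `c₁² (d₀² + d₁²) = d₀²`.
  have hfisher : deriv (p 0) α₀ ^ 2 = p 0 α₀ * p 1 α₀ * (4 * ‖ψ'‖ ^ 2) := by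
    have hunit : c 0 ^ 2 + c 1 ^ 2 = 1 := by rw [← hp, ← hp]; exact hsum α₀
    rw [(hderiv 0).deriv, hp, hp, ← b.inner_sq_add_inner_sq ψ']
    linear_combination (-4 * c 0 ^ 2 * d 0 ^ 2) * hunit
      + 4 * c 0 ^ 2 * (c 0 * d 0 - c 1 * d 1) * horth
  have hden : 4 * ‖ψ'‖ ^ 2 ≠ 0 :=
    right_ne_zero_of_mul (hfisher ▸ pow_ne_zero 2 hp' :)
  rw [hdE, hV₀, div_eq_div_iff (by simp [sub_ne_zero.mpr hlam, hp']) hden, mul_pow, hfisher]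
  ring

/-- Observation 3: for a family of unit vectors in a real two-dimensional space, a
two-outcome observable built on a real orthonormal basis saturates the quantum
Cramér–Rao bound. -/
theorem real_two_dim_saturates_quantum_cramer_rao
    (ψ : ℝ → EuclideanSpace ℝ (Fin 2)) (α₀ : ℝ)
    (ψ' : EuclideanSpace ℝ (Fin 2)) (hψ : HasDerivAt ψ ψ' α₀)
    (hnorm : ∀ α : ℝ, ‖ψ α‖ = 1)
    (b : OrthonormalBasis (Fin 2) ℝ (EuclideanSpace ℝ (Fin 2)))
    (lam₁ lam₂ : ℝ) (hlam : lam₁ ≠ lam₂)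
    (p : Fin 2 → ℝ → ℝ)
    (hp : ∀ (i : Fin 2) (α : ℝ), p i α = (inner ℝ (b i) (ψ α) : ℝ) ^ 2)
    (E V : ℝ → ℝ)
    (hE : ∀ α : ℝ, E α = lam₁ * p 0 α + lam₂ * p 1 α)
    (hV : ∀ α : ℝ, V α = lam₁ ^ 2 * p 0 α + lam₂ ^ 2 * p 1 α - (E α) ^ 2)
    (h0 : p 0 α₀ ≠ 0) (h1 : p 1 α₀ ≠ 0)
    (hp' : deriv (p 0) α₀ ≠ 0) :
    V α₀ / (deriv E α₀) ^ 2 = 1 / (4 * ‖ψ'‖ ^ 2) :=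
  real_two_dim_saturates_quantum_cramer_rao_general ψ α₀ ψ' hψ hnorm b lam₁ lam₂ hlam p hp E V hE hV
    hp'
end

section
/- Let p, q : Fin N → ℝ be nonnegative with Σ_i p_i = 1 and Σ_i q_i = 1, let α ∈ ℝ, and set w_i = α p_i + (1−α) q_i; assume w_i > 0 for every i. Let I = Σ_i (p_i − q_i)²/w_i and assume I ≠ 0. Define λ̃_i = α + (p_i − q_i)/(I · w_i). Then: (a) Σ_i p_i λ̃_i = 1; (b) Σ_i q_i λ̃_i = 0; (c) Σ_i w_i λ̃_i² − α² = 1/I. -/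
/-!
With the score `sᵢ = (pᵢ - qᵢ) / wᵢ` one has `Σ wᵢ = 1`, `Σ wᵢ sᵢ = 0` and `Σ wᵢ sᵢ² = I`, and the
eigenvalues are `λ̃ᵢ = α + sᵢ / I`. Both `p` and `q` are tilts of the mixture, `pᵢ = wᵢ (1 + (1 - α) sᵢ)`
and `qᵢ = wᵢ (1 - α sᵢ)`, so all three identities reduce to the first two moments of `s` under `w`.
-/

open Finset

section Moments

variable {ι K : Type*} [Fintype ι] [Field K] {w s : ι → K} {I : K}

theorem sum_tilt_mul_add_div (hw : ∑ i, w i = 1) (hs : ∑ i, w i * s i = 0)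
    (hs2 : ∑ i, w i * s i ^ 2 = I) (hI : I ≠ 0) {f : ι → K} {c : K}
    (hf : ∀ i, f i = w i * (1 + c * s i)) (a : K) :
    ∑ i, f i * (a + s i / I) = a + c := by
  have expand : ∀ i, f i * (a + s i / I) =
      a * w i + (c * a + 1 / I) * (w i * s i) + c / I * (w i * s i ^ 2) := fun i => by
    rw [hf]; ring
  simp only [expand, sum_add_distrib, ← mul_sum, hw, hs, hs2]
  field_simp
  ring

theorem sum_mul_add_div_sq (hw : ∑ i, w i = 1) (hs : ∑ i, w i * s i = 0)
    (hs2 : ∑ i, w i * s i ^ 2 = I) (hI : I ≠ 0) (a : K) :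
    ∑ i, w i * (a + s i / I) ^ 2 = a ^ 2 + 1 / I := by
  have expand : ∀ i, w i * (a + s i / I) ^ 2 =
      a ^ 2 * w i + 2 * a / I * (w i * s i) + 1 / I ^ 2 * (w i * s i ^ 2) := fun i => by ring
  simp only [expand, sum_add_distrib, ← mul_sum, hw, hs, hs2]
  field_simp
  ring

end Moments

section Mixture

variable {K : Type*} [Field K] {α p q w : K}

theorem eq_tilt_left_of_mixture (hw : w = α * p + (1 - α) * q) (h0 : w ≠ 0) :
    p = w * (1 + (1 - α) * ((p - q) / w)) := by
  field_simp
  linear_combination -hw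

theorem eq_tilt_right_of_mixture (hw : w = α * p + (1 - α) * q) (h0 : w ≠ 0) :
    q = w * (1 + -α * ((p - q) / w)) := by
  field_simp
  linear_combination -hw

end Mixture

theorem optimal_eigenvalues_feasible_and_achieve_inverse_fisher_general
    {N : ℕ} (p q : Fin N → ℝ)
    (hps : ∑ i, p i = 1) (hqs : ∑ i, q i = 1)
    (α : ℝ) (w : Fin N → ℝ)
    (hw : ∀ i, w i = α * p i + (1 - α) * q i)
    (hwpos : ∀ i, 0 < w i)
    (I : ℝ) (hI : I = ∑ i, (p i - q i) ^ 2 / w i) (hI0 : I ≠ 0)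
    (lam : Fin N → ℝ)
    (hlam : ∀ i, lam i = α + (p i - q i) / (I * w i)) :
    (∑ i, p i * lam i = 1) ∧ (∑ i, q i * lam i = 0) ∧
      (∑ i, w i * (lam i) ^ 2 - α ^ 2 = 1 / I) := by
  set s : Fin N → ℝ := fun i => (p i - q i) / w i
  have hw0 : ∀ i, w i ≠ 0 := fun i => (hwpos i).ne'
  have hw1 : ∑ i, w i = 1 := by
    simp only [hw, sum_add_distrib, ← mul_sum, hps, hqs]
    ring
  have hs : ∑ i, w i * s i = 0 := by
    simp only [s, mul_div_cancel₀ _ (hw0 _), sum_sub_distrib, hps, hqs, sub_self]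
  have hs2 : ∑ i, w i * s i ^ 2 = I := by
    rw [hI]
    refine sum_congr rfl fun i _ => ?_
    simp only [s]
    field_simp [hw0 i]
  obtain rfl : lam = fun i => α + s i / I := funext fun i => by
    rw [hlam, div_div, mul_comm]
  refine ⟨?_, ?_, ?_⟩
  · rw [sum_tilt_mul_add_div hw1 hs hs2 hI0 (fun i => eq_tilt_left_of_mixture (hw i) (hw0 i))]
    ring
  · rw [sum_tilt_mul_add_div hw1 hs hs2 hI0 (fun i => eq_tilt_right_of_mixture (hw i) (hw0 i))]
    ring
  · rw [sum_mul_add_div_sq hw1 hs hs2 hI0]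
    ring

/-- The explicit eigenvalues `λ̃ᵢ = α + (pᵢ − qᵢ)/(I wᵢ)` give an unbiased observable
(`Σ pᵢλ̃ᵢ = 1`, `Σ qᵢλ̃ᵢ = 0`) achieving variance `Σ wᵢλ̃ᵢ² − α² = 1/I`, where
`I` is the classical Fisher information of the measurement. -/
theorem optimal_eigenvalues_feasible_and_achieve_inverse_fisher
    {N : ℕ} (p q : Fin N → ℝ)
    (hp : ∀ i, 0 ≤ p i) (hq : ∀ i, 0 ≤ q i)
    (hps : ∑ i, p i = 1) (hqs : ∑ i, q i = 1)
    (α : ℝ) (w : Fin N → ℝ)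
    (hw : ∀ i, w i = α * p i + (1 - α) * q i)
    (hwpos : ∀ i, 0 < w i)
    (I : ℝ) (hI : I = ∑ i, (p i - q i) ^ 2 / w i) (hI0 : I ≠ 0)
    (lam : Fin N → ℝ)
    (hlam : ∀ i, lam i = α + (p i - q i) / (I * w i)) :
    (∑ i, p i * lam i = 1) ∧ (∑ i, q i * lam i = 0) ∧
      (∑ i, w i * (lam i) ^ 2 - α ^ 2 = 1 / I) :=
  optimal_eigenvalues_feasible_and_achieve_inverse_fisher_general p q hps hqs α w hw hwpos I hI hI0
    lam hlam
end

section
/- Let ρ be an N×N Hermitian positive semidefinite complex matrix with eigenvalues listed in descending order λ₁↓ ≥ … ≥ λ_N↓. Let Λ : Fin K → Matrix (Fin N) (Fin N) ℂ be a family of pairwise orthogonal orthogonal projectors (Λ_i Hermitian, Λ_i² = Λ_i, Λ_i Λ_j = 0 for i ≠ j, Σ_i Λ_i = 1) each of rank R, with K·R = N. Set p'_i = Tr(Λ_i ρ) (a real number). Then for every k ≤ K, the sum of the k largest values among (p'_i)_{i=1}^K is at most Σ_{j=1}^{kR} λ_j↓, with equality of total sums at k = K; i.e. the vector (p'_i)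 is majorized by the vector of blockwise sums of the R largest, next R largest, etc., eigenvalues of ρ. -/
/-!
For `S ⊆ Fin K`, `P = ∑ i ∈ S, Λ i` is an orthogonal projection of rank `#S * R`. In an
eigenbasis of `ρ` one has `Tr (P ρ) = ∑ⱼ tⱼ λⱼ`, where the diagonal entries `tⱼ` of `P` lie in
`[0, 1]` and sum to `#S * R` (Schur). A combination of the eigenvalues with such weights is
largest when the weights sit on the `#S * R` largest eigenvalues.
-/

open scoped ComplexOrder MatrixOrder
open Finset

theorem Finset.sum_mul_le_sum_of_forall_le {ι : Type*} [Fintype ι] {F : Finset ι}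
    {t μ : ι → ℝ} (ht : ∀ j, t j ∈ Set.Icc 0 1) (ht_sum : ∑ j, t j = #F)
    (hμ : ∀ i ∈ F, ∀ j ∉ F, μ j ≤ μ i) :
    ∑ j, t j * μ j ≤ ∑ j ∈ F, μ j := by
  classical
  obtain ⟨c, hcF, hcFc⟩ : ∃ c, (∀ j ∈ F, c ≤ μ j) ∧ ∀ j ∉ F, μ j ≤ c := by
    rcases F.eq_empty_or_nonempty with rfl | hF
    · obtain ⟨c, hc⟩ := (Set.finite_range μ).bddAbove
      exact ⟨c, by simp, fun j _ => hc ⟨j, rfl⟩⟩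
    · exact ⟨F.inf' hF μ, fun j hj => F.inf'_le μ hj,
        fun j hj => F.le_inf' hF μ fun i hi => hμ i hi j hj⟩
  have key : ∑ j ∈ F, μ j - ∑ j, t j * μ j =
      ∑ j ∈ F, (1 - t j) * (μ j - c) + ∑ j ∈ Fᶜ, t j * (c - μ j) := by
    have hsplit := F.sum_add_sum_compl (fun j => t j * μ j)
    have ht_split := F.sum_add_sum_compl t
    simp only [sub_mul, mul_sub, one_mul, sum_sub_distrib, ← sum_mul, sum_const, nsmul_eq_mul]
    linear_combination hsplit - c * ht_split - c * ht_sum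
  have hF : 0 ≤ ∑ j ∈ F, (1 - t j) * (μ j - c) := sum_nonneg fun j hj =>
    mul_nonneg (sub_nonneg.mpr (ht j).2) (sub_nonneg.mpr (hcF j hj))
  have hFc : 0 ≤ ∑ j ∈ Fᶜ, t j * (c - μ j) := sum_nonneg fun j hj =>
    mul_nonneg (ht j).1 (sub_nonneg.mpr (hcFc j (mem_compl.mp hj)))
  linarith

theorem Antitone.sum_mul_le_sum_filter_lt {N r : ℕ} (hr : r ≤ N) {t μ : Fin N → ℝ}
    (hμ : Antitone μ) (ht : ∀ j, t j ∈ Set.Icc 0 1) (ht_sum : ∑ j, t j = r) :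
    ∑ j, t j * μ j ≤ ∑ j ∈ univ.filter (fun j : Fin N => (j : ℕ) < r), μ j := by
  refine sum_mul_le_sum_of_forall_le ht ?_ fun i hi j hj => hμ ?_
  · rw [ht_sum, Fin.card_filter_val_lt, min_eq_right hr]
  · simp only [mem_filter, mem_univ, true_and, not_lt] at hi hj
    exact Fin.le_def.mpr (by omega)

theorem IsStarProjection.sum {ι R : Type*} [NonUnitalSemiring R] [StarRing R]
    {s : Finset ι} {p : ι → R} (hp : ∀ i ∈ s, IsStarProjection (p i))
    (horth : ∀ i ∈ s, ∀ j ∈ s, i ≠ j → p i * p j = 0) :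
    IsStarProjection (∑ i ∈ s, p i) := by
  classical
  induction s using Finset.induction_on with
  | empty => simp [IsStarProjection.zero]
  | insert a s ha ih =>
    rw [sum_insert ha]
    refine (hp a (mem_insert_self a s)).add
      (ih (fun i hi => hp i (mem_insert_of_mem hi))
        fun i hi j hj => horth i (mem_insert_of_mem hi) j (mem_insert_of_mem hj)) ?_
    rw [mul_sum]
    exact sum_eq_zero fun j hj =>
      horth a (mem_insert_self a s) j (mem_insert_of_mem hj) (ne_of_mem_of_not_mem hj ha).symm

namespace Matrix

variable {n 𝕜 : Type*} [Fintype n] [DecidableEq n] [RCLike 𝕜]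

theorem trace_eq_rank_of_isIdempotentElem {K : Type*} [Field K] {A : Matrix n n K}
    (hA : IsIdempotentElem A) : A.trace = A.rank := by
  have hA' : IsIdempotentElem (toLin' A) := hA.map toLinAlgEquiv'
  rw [← trace_toLin'_eq, (LinearMap.IsIdempotentElem.isProj_range _ hA').trace, rank]
  rfl

theorem _root_.IsStarProjection.diag_mem_Icc {Q : Matrix n n 𝕜} (hQ : IsStarProjection Q)
    (j : n) : Q j j ∈ Set.Icc 0 1 := by
  refine ⟨(nonneg_iff_posSemidef.mp hQ.nonneg).diag_nonneg, ?_⟩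
  simpa [sub_nonneg] using (nonneg_iff_posSemidef.mp hQ.one_sub_nonneg).diag_nonneg (i := j)

theorem IsHermitian.trace_mul_eq_sum_diag_mul_eigenvalues {A : Matrix n n 𝕜}
    (hA : A.IsHermitian) (M : Matrix n n 𝕜) :
    (M * A).trace = ∑ j, (Unitary.conjStarAlgAut 𝕜 _ (star hA.eigenvectorUnitary) M) j j *
      hA.eigenvalues j := by
  conv_lhs => rw [hA.spectral_theorem]
  simp only [Unitary.conjStarAlgAut_apply, Unitary.coe_star, star_star]
  rw [← Matrix.mul_assoc, trace_mul_cycle, ← Matrix.mul_assoc, trace]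
  simp [mul_diagonal]

theorem _root_.IsStarProjection.exists_trace_mul_eq_sum_mul_eigenvalues {P A : Matrix n n 𝕜}
    (hP : IsStarProjection P) (hA : A.IsHermitian) :
    ∃ t : n → ℝ, (∀ j, t j ∈ Set.Icc 0 1) ∧ (∑ j, t j : 𝕜) = P.trace ∧
      (P * A).trace = ∑ j, (t j * hA.eigenvalues j : 𝕜) := by
  set Q := Unitary.conjStarAlgAut 𝕜 _ (star hA.eigenvectorUnitary) P
  have hQ : IsStarProjection Q := hP.map _
  have hQ_real (j : n) : (RCLike.re (Q j j) : 𝕜) = Q j j :=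
    hQ.isSelfAdjoint.isHermitian.coe_re_apply_self j
  refine ⟨fun j => RCLike.re (Q j j), fun j => ?_, ?_, ?_⟩
  · obtain ⟨h0, h1⟩ := hQ.diag_mem_Icc j
    rw [← hQ_real] at h0 h1
    exact ⟨by exact_mod_cast h0, by exact_mod_cast h1⟩
  · simp only [hQ_real]
    exact trace_map' _ P
  · simp only [hQ_real]
    exact hA.trace_mul_eq_sum_diag_mul_eigenvalues P

end Matrix

/-- Majorization of measurement outcome distributions: for a Hermitian PSD matrix `ρ` with
eigenvalues `μ` in descending order and a complete family of pairwise orthogonal rank-`R`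
projectors `Λ` with `K * R = N`, the outcome distribution `p'ᵢ = Tr(Λᵢ ρ)` is majorized by
the blockwise sums of the `R` largest, next `R` largest, etc., eigenvalues: any `k` of the
`p'ᵢ` sum to at most the `k·R` largest eigenvalues, with equality of total sums. -/
theorem projective_outcomes_majorized_by_eigenvalue_blocks
    {N K R : ℕ} (hKR : K * R = N)
    (ρ : Matrix (Fin N) (Fin N) ℂ) (hρ : ρ.PosSemidef)
    (μ : Fin N → ℝ) (hmono : Antitone μ)
    (hperm : ∃ σ : Equiv.Perm (Fin N), ∀ i, μ i = hρ.isHermitian.eigenvalues (σ i))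
    (Λ : Fin K → Matrix (Fin N) (Fin N) ℂ)
    (hherm : ∀ i, (Λ i).IsHermitian)
    (hidem : ∀ i, Λ i * Λ i = Λ i)
    (horth : ∀ i j, i ≠ j → Λ i * Λ j = 0)
    (hsum : ∑ i, Λ i = 1)
    (hrank : ∀ i, (Λ i).rank = R)
    (p' : Fin K → ℝ) (hp' : ∀ i, (p' i : ℂ) = (Λ i * ρ).trace) :
    (∀ S : Finset (Fin K),
        ∑ i ∈ S, p' i ≤ ∑ j ∈ Finset.univ.filter (fun j : Fin N => (j : ℕ) < S.card * R), μ j)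
      ∧ ∑ i, p' i = ∑ j, μ j := by
  obtain ⟨σ, hσ⟩ := hperm
  have hp'_sum (S : Finset (Fin K)) :
      ((∑ i ∈ S, p' i : ℝ) : ℂ) = ((∑ i ∈ S, Λ i) * ρ).trace := by
    simp [sum_mul, Matrix.trace_sum, hp']
  refine ⟨fun S => ?_, ?_⟩
  · have hP : IsStarProjection (∑ i ∈ S, Λ i) :=
      .sum (fun i _ => ⟨hidem i, hherm i⟩) fun i _ j _ hij => horth i j hij
    have hP_trace : (∑ i ∈ S, Λ i).trace = (S.card * R : ℕ) := by
      simp [Matrix.trace_sum, Matrix.trace_eq_rank_of_isIdempotentElem (hidem _), hrank]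
    have hSR : S.card * R ≤ N := hKR ▸ Nat.mul_le_mul_right R (by simpa using S.card_le_univ)
    obtain ⟨t, ht, ht_sum, htrace⟩ := hP.exists_trace_mul_eq_sum_mul_eigenvalues hρ.isHermitian
    simp only [RCLike.ofReal_eq_complex_ofReal] at ht_sum htrace
    have htσ_sum : ∑ j, t (σ j) = (S.card * R : ℕ) := by
      rw [Equiv.sum_comp σ t]
      exact_mod_cast ht_sum.trans hP_trace
    have hS : ∑ i ∈ S, p' i = ∑ j, t (σ j) * μ j := by
      simp only [hσ]
      rw [Equiv.sum_comp σ (fun j => t j * hρ.isHermitian.eigenvalues j)]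
      exact_mod_cast (hp'_sum S).trans htrace
    rw [hS]
    exact hmono.sum_mul_le_sum_filter_lt hSR (fun j => ht (σ j)) htσ_sum
  · have htotal := hp'_sum univ
    rw [hsum, one_mul, hρ.isHermitian.trace_eq_sum_eigenvalues] at htotal
    simp only [RCLike.ofReal_eq_complex_ofReal] at htotal
    simp only [hσ]
    rw [Equiv.sum_comp σ]
    exact_mod_cast htotal
end

section
/- Let ρ⁽¹⁾, ρ⁽²⁾ be D×D Hermitian complex matrices, α, μ ∈ ℝ, and ρ_α = α·ρ⁽¹⁾ + (1−α)·ρ⁽²⁾. Let M be a Hermitian matrix with spectral decomposition M = Σ_{i=1}^K λ_i Λ_i, where the Λ_i are pairwise orthogonal orthogonal projectors with Σ_i Λ_i = 1 and λ_i ∈ ℝ. Suppose ρ_α M + M ρ_α = 2α ρ_α − μ (ρ⁽¹⁾ − ρ⁽²⁾). Then for every i such that α p_i⁽¹⁾ + (1−α) p_i⁽²⁾ ≠ 0, where p_i⁽ᵃ⁾ = Tr(Λ_i ρ⁽ᵃ⁾) (real numbers), one has λ_i = α − μ (p_i⁽¹⁾ − p_i⁽²⁾) / ( 2 (α p_i⁽¹⁾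 + (1−α) p_i⁽²⁾) ). -/
/-!
Orthogonality of the idempotents gives `M Λᵢ = Λᵢ M = λᵢ Λᵢ`. Multiplying the optimality
equation by `Λᵢ` and taking traces, cyclicity of the trace turns both terms of the
anticommutator into `λᵢ Tr(Λᵢ ρ_α) = λᵢ qᵢ` with `qᵢ = α pᵢ⁽¹⁾ + (1 - α) pᵢ⁽²⁾`, so
`2 λᵢ qᵢ = 2 α qᵢ - μ (pᵢ⁽¹⁾ - pᵢ⁽²⁾)`, which is solved for `λᵢ` when `qᵢ ≠ 0`.
-/

section OrthogonalIdempotents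

variable {ι R A : Type*} [Fintype ι] [Semiring R] [Semiring A] [Module R A]

theorem sum_smul_mul_of_orthogonal [DecidableEq ι] [IsScalarTower R A A]
    (c : ι → R) (Λ : ι → A)
    (hidem : ∀ i, Λ i * Λ i = Λ i) (horth : ∀ i j, i ≠ j → Λ i * Λ j = 0) (i : ι) :
    (∑ j, c j • Λ j) * Λ i = c i • Λ i := by
  rw [Finset.sum_mul, Finset.sum_eq_single_of_mem i (Finset.mem_univ i)
    fun j _ hj ↦ by rw [smul_mul_assoc, horth j i hj, smul_zero], smul_mul_assoc, hidem]

theorem mul_sum_smul_of_orthogonal [DecidableEq ι] [SMulCommClass R A A]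
    (c : ι → R) (Λ : ι → A)
    (hidem : ∀ i, Λ i * Λ i = Λ i) (horth : ∀ i j, i ≠ j → Λ i * Λ j = 0) (i : ι) :
    Λ i * ∑ j, c j • Λ j = c i • Λ i := by
  rw [Finset.mul_sum, Finset.sum_eq_single_of_mem i (Finset.mem_univ i)
    fun j _ hj ↦ by rw [mul_smul_comm, horth i j hj.symm, smul_zero], mul_smul_comm, hidem]

end OrthogonalIdempotents

namespace Matrix

variable {n R : Type*} [Fintype n] [CommRing R]

theorem trace_mul_add_mul_of_mul_eq_smul {P M X : Matrix n n R} {c : R}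
    (hMP : M * P = c • P) (hPM : P * M = c • P) :
    (P * (X * M + M * X)).trace = 2 * c * (P * X).trace := by
  have hright : (P * (X * M)).trace = c * (P * X).trace := by
    rw [← Matrix.mul_assoc, trace_mul_cycle, hMP, smul_mul, trace_smul, trace_mul_comm,
      smul_eq_mul]
  have hleft : (P * (M * X)).trace = c * (P * X).trace := by
    rw [← Matrix.mul_assoc, hPM, smul_mul, trace_smul, smul_eq_mul]
  rw [Matrix.mul_add, trace_add, hright, hleft]
  ring

end Matrix

theorem eigenvalues_of_optimality_equation_general
    {D K : ℕ} (ρ₁ ρ₂ : Matrix (Fin D) (Fin D) ℂ)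
    (α μ : ℝ) (ρα : Matrix (Fin D) (Fin D) ℂ)
    (hρα : ρα = (α : ℂ) • ρ₁ + ((1 - α : ℝ) : ℂ) • ρ₂)
    (lam : Fin K → ℝ) (Λ : Fin K → Matrix (Fin D) (Fin D) ℂ)
    (hidem : ∀ i, Λ i * Λ i = Λ i)
    (horth : ∀ i j, i ≠ j → Λ i * Λ j = 0)
    (M : Matrix (Fin D) (Fin D) ℂ) (hM : M = ∑ i, (lam i : ℂ) • Λ i)
    (heq : ρα * M + M * ρα = ((2 * α : ℝ) : ℂ) • ρα - (μ : ℂ) • (ρ₁ - ρ₂))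
    (p₁ p₂ : Fin K → ℝ)
    (hp₁ : ∀ i, ((p₁ i : ℝ) : ℂ) = (Λ i * ρ₁).trace)
    (hp₂ : ∀ i, ((p₂ i : ℝ) : ℂ) = (Λ i * ρ₂).trace) :
    ∀ i : Fin K, α * p₁ i + (1 - α) * p₂ i ≠ 0 →
      lam i = α - μ * (p₁ i - p₂ i) / (2 * (α * p₁ i + (1 - α) * p₂ i)) := by
  intro i hq
  have hMΛ : M * Λ i = (lam i : ℂ) • Λ i := hM ▸ sum_smul_mul_of_orthogonal _ Λ hidem horth i
  have hΛM : Λ i * M = (lam i : ℂ) • Λ i := hM ▸ mul_sum_smul_of_orthogonal _ Λ hidem horth i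
  have htrace : (Λ i * ρα).trace = ((α * p₁ i + (1 - α) * p₂ i : ℝ) : ℂ) := by
    simp only [hρα, Matrix.mul_add, Matrix.mul_smul, Matrix.trace_add, Matrix.trace_smul,
      ← hp₁, ← hp₂, smul_eq_mul]
    push_cast
    ring
  have hcomplex := congrArg (fun X ↦ (Λ i * X).trace) heq
  simp only [Matrix.trace_mul_add_mul_of_mul_eq_smul hMΛ hΛM, Matrix.mul_sub, Matrix.mul_smul,
    Matrix.trace_sub, Matrix.trace_smul, htrace, ← hp₁, ← hp₂, smul_eq_mul] at hcomplex
  have hreal : 2 * lam i * (α * p₁ i + (1 - α) * p₂ i)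
      = 2 * α * (α * p₁ i + (1 - α) * p₂ i) - μ * (p₁ i - p₂ i) := by
    exact_mod_cast hcomplex
  rw [eq_sub_iff_add_eq, ← eq_sub_iff_add_eq', div_eq_iff (mul_ne_zero two_ne_zero hq)]
  linear_combination hreal

/-- Eq. (x_expr): the eigenvalues of an observable satisfying the Lagrange optimality
equation `ρ_α M + M ρ_α = 2α ρ_α − μ (ρ⁽¹⁾ − ρ⁽²⁾)` are
`λᵢ = α − μ (pᵢ⁽¹⁾ − pᵢ⁽²⁾)/(2(α pᵢ⁽¹⁾ + (1−α) pᵢ⁽²⁾))`. -/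
theorem eigenvalues_of_optimality_equation
    {D K : ℕ} (ρ₁ ρ₂ : Matrix (Fin D) (Fin D) ℂ)
    (h₁ : ρ₁.IsHermitian) (h₂ : ρ₂.IsHermitian)
    (α μ : ℝ) (ρα : Matrix (Fin D) (Fin D) ℂ)
    (hρα : ρα = (α : ℂ) • ρ₁ + ((1 - α : ℝ) : ℂ) • ρ₂)
    (lam : Fin K → ℝ) (Λ : Fin K → Matrix (Fin D) (Fin D) ℂ)
    (hherm : ∀ i, (Λ i).IsHermitian)
    (hidem : ∀ i, Λ i * Λ i = Λ i)
    (horth : ∀ i j, i ≠ j → Λ i * Λ j = 0)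
    (hsum : ∑ i, Λ i = 1)
    (M : Matrix (Fin D) (Fin D) ℂ) (hM : M = ∑ i, (lam i : ℂ) • Λ i)
    (heq : ρα * M + M * ρα = ((2 * α : ℝ) : ℂ) • ρα - (μ : ℂ) • (ρ₁ - ρ₂))
    (p₁ p₂ : Fin K → ℝ)
    (hp₁ : ∀ i, ((p₁ i : ℝ) : ℂ) = (Λ i * ρ₁).trace)
    (hp₂ : ∀ i, ((p₂ i : ℝ) : ℂ) = (Λ i * ρ₂).trace) :
    ∀ i : Fin K, α * p₁ i + (1 - α) * p₂ i ≠ 0 →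
      lam i = α - μ * (p₁ i - p₂ i) / (2 * (α * p₁ i + (1 - α) * p₂ i)) :=
  eigenvalues_of_optimality_equation_general ρ₁ ρ₂ α μ ρα hρα lam Λ hidem horth M hM heq p₁ p₂ hp₁
    hp₂
end

section
/- Let ρ⁽¹⁾, ρ⁽²⁾ be D×D Hermitian complex matrices, α, μ ∈ ℝ, and ρ_α = α·ρ⁽¹⁾ + (1−α)·ρ⁽²⁾. Let M be a Hermitian matrix with Tr(ρ⁽¹⁾ M) = 1 and Tr(ρ⁽²⁾ M) = 0, satisfying ρ_α M + M ρ_α = 2α ρ_α − μ (ρ⁽¹⁾ − ρ⁽²⁾). Then Tr(ρ_α M²) = α² − μ/2; consequently the variance satisfies Tr(ρ_α M²) − (Tr(ρ_α M))² = −μ/2. -/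
/-!
Multiply the optimality equation on the right by `M` and take traces. By cyclicity both
`Tr(ρ_α M M)` and `Tr(M ρ_α M)` equal `Tr(ρ_α M²)`, while unbiasedness gives `Tr(ρ_α M) = α` and
`Tr((ρ⁽¹⁾ − ρ⁽²⁾) M) = 1`; hence `2 Tr(ρ_α M²) = 2α² − μ`.
-/

namespace Matrix

variable {n R : Type*} [Fintype n] [CommRing R]

theorem trace_anticommutator_mul_right (A M : Matrix n n R) :
    ((A * M + M * A) * M).trace = 2 * (A * (M * M)).trace := by
  rw [add_mul, trace_add, trace_mul_cycle M A M, trace_mul_comm (M * M), Matrix.mul_assoc, two_mul]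

theorem trace_mixture_mul_of_trace_mul_eq_one_of_trace_mul_eq_zero {A B M : Matrix n n R}
    (hA : (A * M).trace = 1) (hB : (B * M).trace = 0) (α : R) :
    ((α • A + (1 - α) • B) * M).trace = α := by
  simp only [add_mul, smul_mul, trace_add, trace_smul, hA, hB, smul_eq_mul, mul_one, mul_zero,
    add_zero]

theorem trace_sub_mul_of_trace_mul_eq_one_of_trace_mul_eq_zero {A B M : Matrix n n R}
    (hA : (A * M).trace = 1) (hB : (B * M).trace = 0) :
    ((A - B) * M).trace = 1 := by
  rw [sub_mul, trace_sub, hA, hB, sub_zero]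

end Matrix

open Matrix in
theorem variance_eq_neg_half_multiplier_general
    {D : ℕ} (ρ₁ ρ₂ : Matrix (Fin D) (Fin D) ℂ)
    (α μ : ℝ) (ρα : Matrix (Fin D) (Fin D) ℂ)
    (hρα : ρα = (α : ℂ) • ρ₁ + ((1 - α : ℝ) : ℂ) • ρ₂)
    (M : Matrix (Fin D) (Fin D) ℂ)
    (htr₁ : (ρ₁ * M).trace = 1) (htr₂ : (ρ₂ * M).trace = 0)
    (heq : ρα * M + M * ρα = ((2 * α : ℝ) : ℂ) • ρα - (μ : ℂ) • (ρ₁ - ρ₂)) :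
    (ρα * (M * M)).trace = ((α ^ 2 - μ / 2 : ℝ) : ℂ) ∧
      (ρα * (M * M)).trace - ((ρα * M).trace) ^ 2 = ((-(μ / 2) : ℝ) : ℂ) := by
  have hmean : (ρα * M).trace = α := by
    rw [hρα, Complex.ofReal_sub, Complex.ofReal_one]
    exact trace_mixture_mul_of_trace_mul_eq_one_of_trace_mul_eq_zero htr₁ htr₂ _
  have hdiff := trace_sub_mul_of_trace_mul_eq_one_of_trace_mul_eq_zero htr₁ htr₂
  have htwice : 2 * (ρα * (M * M)).trace = 2 * α * α - μ := by
    rw [← trace_anticommutator_mul_right, heq, sub_mul, trace_sub, smul_mul, smul_mul,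
      trace_smul, trace_smul, hmean, hdiff]
    simp
  have hsecond : (ρα * (M * M)).trace = ((α ^ 2 - μ / 2 : ℝ) : ℂ) := by
    push_cast
    linear_combination htwice / 2
  refine ⟨hsecond, ?_⟩
  rw [hsecond, hmean]
  push_cast
  ring

/-- Eqs. (trsq)–(var_con): an unbiased observable satisfying the Lagrange optimality
equation has `Tr(ρ_α M²) = α² − μ/2`, hence variance `−μ/2`. -/
theorem variance_eq_neg_half_multiplier
    {D : ℕ} (ρ₁ ρ₂ : Matrix (Fin D) (Fin D) ℂ)
    (h₁ : ρ₁.IsHermitian) (h₂ : ρ₂.IsHermitian)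
    (α μ : ℝ) (ρα : Matrix (Fin D) (Fin D) ℂ)
    (hρα : ρα = (α : ℂ) • ρ₁ + ((1 - α : ℝ) : ℂ) • ρ₂)
    (M : Matrix (Fin D) (Fin D) ℂ) (hM : M.IsHermitian)
    (htr₁ : (ρ₁ * M).trace = 1) (htr₂ : (ρ₂ * M).trace = 0)
    (heq : ρα * M + M * ρα = ((2 * α : ℝ) : ℂ) • ρα - (μ : ℂ) • (ρ₁ - ρ₂)) :
    (ρα * (M * M)).trace = ((α ^ 2 - μ / 2 : ℝ) : ℂ) ∧
      (ρα * (M * M)).trace - ((ρα * M).trace) ^ 2 = ((-(μ / 2) : ℝ) : ℂ) :=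
  variance_eq_neg_half_multiplier_general ρ₁ ρ₂ α μ ρα hρα M htr₁ htr₂ heq
end

section
/- Let ρ⁽¹⁾, ρ⁽²⁾ be D×D Hermitian complex matrices with Tr ρ⁽¹⁾ = Tr ρ⁽²⁾ = 1, set ρ_{1/2} = (ρ⁽¹⁾ + ρ⁽²⁾)/2 and ρ_α = α·ρ⁽¹⁾ + (1−α)·ρ⁽²⁾. Let L be Hermitian with (1/2)(ρ_{1/2} L + L ρ_{1/2}) = ρ⁽¹⁾ − ρ⁽²⁾, and suppose I_q := Tr(ρ_{1/2} L²) is nonzero. Define M = (1/2)·1 + (1/I_q)·L. Then Tr(ρ_α M) = α for every α ∈ ℝ, and the total variance satisfies ∫₀¹ [ Tr(ρ_α M²) − (Tr(ρ_α M))² ] dα = 1/I_q − 1/12. -/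
/-!
Along the segment, `ρ_α = ρ_{1/2} + (α - 1/2)(ρ⁽¹⁾ - ρ⁽²⁾)`, so every expectation `Tr(ρ_α X)` is
affine in `α`. Taking traces in the SLD equation gives `Tr(ρ_{1/2} L) = Tr(ρ⁽¹⁾ - ρ⁽²⁾) = 0`, and
multiplying it by `L` first gives `Tr((ρ⁽¹⁾ - ρ⁽²⁾) L) = Tr(ρ_{1/2} L²) = I_q`; together these make
`Tr(ρ_α M) = α`. Hence the variance is `Tr(ρ_α M²) - α²` with `Tr(ρ_α M²)` affine in `α` and equal
to `1/4 + 1/I_q` at `α = 1/2`; integrating over `[0, 1]`, the linear part around `1/2` vanishes and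
`∫₀¹ α² = 1/3` leaves `1/I_q - 1/12`.
-/

namespace Matrix

variable {n R : Type*} [Fintype n] [CommRing R]

theorem trace_mul_add_mul_rev (ρ L : Matrix n n R) :
    (ρ * L + L * ρ).trace = 2 * (ρ * L).trace := by
  rw [trace_add, trace_mul_comm L ρ, two_mul]

theorem trace_mul_add_mul_rev_mul (ρ L : Matrix n n R) :
    ((ρ * L + L * ρ) * L).trace = 2 * (ρ * (L * L)).trace := by
  rw [add_mul, trace_add, Matrix.mul_assoc L, trace_mul_comm L, Matrix.mul_assoc, two_mul]

theorem trace_add_smul_mul (ρ Δ X : Matrix n n R) (t : R) :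
    ((ρ + t • Δ) * X).trace = (ρ * X).trace + t * (Δ * X).trace := by
  rw [add_mul, trace_add, smul_mul, trace_smul, smul_eq_mul]

variable [DecidableEq n]

theorem trace_mul_smul_one_add_smul (ρ L : Matrix n n R) (a b : R) :
    (ρ * (a • 1 + b • L)).trace = a * ρ.trace + b * (ρ * L).trace := by
  rw [mul_add, Matrix.mul_smul, Matrix.mul_smul, mul_one, trace_add, trace_smul, trace_smul,
    smul_eq_mul, smul_eq_mul]

theorem trace_mul_sq_smul_one_add_smul (ρ L : Matrix n n R) (a b : R) :
    (ρ * ((a • 1 + b • L) * (a • 1 + b • L))).trace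
      = a ^ 2 * ρ.trace + 2 * a * b * (ρ * L).trace + b ^ 2 * (ρ * (L * L)).trace := by
  have hsq : (a • 1 + b • L) * (a • 1 + b • L)
      = (a ^ 2) • 1 + (2 * a * b) • L + (b ^ 2) • (L * L) := by
    simp only [add_mul, mul_add, smul_mul, Matrix.mul_smul, one_mul, mul_one, smul_smul]
    module
  simp only [hsq, mul_add, Matrix.mul_smul, mul_one, trace_add, trace_smul, smul_eq_mul]

end Matrix

theorem intervalIntegral_add_mul_sub_half_sub_sq (a b : ℝ) :
    ∫ α in (0 : ℝ)..1, (a + (α - 1 / 2) * b - α ^ 2) = a - 1 / 3 := by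
  have hcont : ∀ f : ℝ → ℝ, Continuous f → IntervalIntegrable f MeasureTheory.volume 0 1 :=
    fun f hf => hf.intervalIntegrable 0 1
  rw [intervalIntegral.integral_sub (hcont _ (by fun_prop)) (hcont _ (by fun_prop)),
    intervalIntegral.integral_add (hcont _ (by fun_prop)) (hcont _ (by fun_prop)),
    intervalIntegral.integral_mul_const, intervalIntegral.integral_sub (hcont _ (by fun_prop))
      (hcont _ (by fun_prop)), integral_id, integral_pow]
  simp only [intervalIntegral.integral_const, smul_eq_mul]
  ring

open Matrix in
theorem global_optimal_observable_total_variance_general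
    {D : ℕ} (ρ₁ ρ₂ : Matrix (Fin D) (Fin D) ℂ)
    (htr₁ : ρ₁.trace = 1) (htr₂ : ρ₂.trace = 1)
    (ρhalf : Matrix (Fin D) (Fin D) ℂ)
    (hρhalf : ρhalf = ((1 / 2 : ℝ) : ℂ) • (ρ₁ + ρ₂))
    (ρ : ℝ → Matrix (Fin D) (Fin D) ℂ)
    (hρ : ∀ α : ℝ, ρ α = (α : ℂ) • ρ₁ + ((1 - α : ℝ) : ℂ) • ρ₂)
    (L : Matrix (Fin D) (Fin D) ℂ)
    (hsld : ((1 : ℂ) / 2) • (ρhalf * L + L * ρhalf) = ρ₁ - ρ₂)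
    (Iq : ℝ) (hIq : (ρhalf * (L * L)).trace = (Iq : ℂ)) (hIq0 : Iq ≠ 0)
    (M : Matrix (Fin D) (Fin D) ℂ)
    (hM : M = ((1 / 2 : ℝ) : ℂ) • (1 : Matrix (Fin D) (Fin D) ℂ) + ((1 / Iq : ℝ) : ℂ) • L) :
    (∀ α : ℝ, (ρ α * M).trace = (α : ℂ)) ∧
      (∫ α in (0 : ℝ)..1,
          (((ρ α * (M * M)).trace).re - (((ρ α * M).trace).re) ^ 2))
        = 1 / Iq - 1 / 12 := by
  have hIqC : (Iq : ℂ) ≠ 0 := Complex.ofReal_ne_zero.mpr hIq0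
  have hρ_affine (α : ℝ) : ρ α = ρhalf + ((α - 1 / 2 : ℝ) : ℂ) • (ρ₁ - ρ₂) := by
    rw [hρ, hρhalf]
    push_cast
    module
  have htr_half : ρhalf.trace = 1 := by
    rw [hρhalf, trace_smul, trace_add, htr₁, htr₂]
    norm_num
  have htrL : (ρhalf * L).trace = 0 := by
    have h := congrArg trace hsld
    rw [trace_smul, trace_mul_add_mul_rev, trace_sub, htr₁, htr₂, smul_eq_mul] at h
    linear_combination h
  have htrΔL : ((ρ₁ - ρ₂) * L).trace = Iq := by
    rw [← hsld, smul_mul, trace_smul, trace_mul_add_mul_rev_mul, hIq, smul_eq_mul]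
    ring
  have htrΔ : (ρ₁ - ρ₂).trace = 0 := by rw [trace_sub, htr₁, htr₂, sub_self]
  have hmean (α : ℝ) : (ρ α * M).trace = α := by
    rw [hρ_affine, trace_add_smul_mul, hM, trace_mul_smul_one_add_smul,
      trace_mul_smul_one_add_smul, htr_half, htrL, htrΔ, htrΔL]
    push_cast
    field_simp
    ring
  have hsecond : (ρhalf * (M * M)).trace = ((1 / 4 + 1 / Iq : ℝ) : ℂ) := by
    rw [hM, trace_mul_sq_smul_one_add_smul, htr_half, htrL, hIq]
    push_cast
    field_simp
    ring
  refine ⟨hmean, ?_⟩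
  calc _ = ∫ α in (0 : ℝ)..1,
        ((1 / 4 + 1 / Iq) + (α - 1 / 2) * ((ρ₁ - ρ₂) * (M * M)).trace.re - α ^ 2) := by
        refine intervalIntegral.integral_congr fun α _ => ?_
        rw [hmean, hρ_affine, trace_add_smul_mul, hsecond, Complex.add_re, Complex.re_ofReal_mul,
          Complex.ofReal_re, Complex.ofReal_re]
    _ = 1 / Iq - 1 / 12 := by
        rw [intervalIntegral_add_mul_sub_half_sub_sq]
        ring

/-- The globally optimal observable `M = (1/2)·1 + L/I_q` built from the symmetric
logarithmic derivative `L` at `α = 1/2` is unbiased (`Tr(ρ_α M) = α` for all `α`) and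
achieves total variance `∫₀¹ Δ²_{ρ_α} M dα = 1/I_q − 1/12`. -/
theorem global_optimal_observable_total_variance
    {D : ℕ} (ρ₁ ρ₂ : Matrix (Fin D) (Fin D) ℂ)
    (h₁ : ρ₁.IsHermitian) (h₂ : ρ₂.IsHermitian)
    (htr₁ : ρ₁.trace = 1) (htr₂ : ρ₂.trace = 1)
    (ρhalf : Matrix (Fin D) (Fin D) ℂ)
    (hρhalf : ρhalf = ((1 / 2 : ℝ) : ℂ) • (ρ₁ + ρ₂))
    (ρ : ℝ → Matrix (Fin D) (Fin D) ℂ)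
    (hρ : ∀ α : ℝ, ρ α = (α : ℂ) • ρ₁ + ((1 - α : ℝ) : ℂ) • ρ₂)
    (L : Matrix (Fin D) (Fin D) ℂ) (hL : L.IsHermitian)
    (hsld : ((1 : ℂ) / 2) • (ρhalf * L + L * ρhalf) = ρ₁ - ρ₂)
    (Iq : ℝ) (hIq : (ρhalf * (L * L)).trace = (Iq : ℂ)) (hIq0 : Iq ≠ 0)
    (M : Matrix (Fin D) (Fin D) ℂ)
    (hM : M = ((1 / 2 : ℝ) : ℂ) • (1 : Matrix (Fin D) (Fin D) ℂ) + ((1 / Iq : ℝ) : ℂ) • L) :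
    (∀ α : ℝ, (ρ α * M).trace = (α : ℂ)) ∧
      (∫ α in (0 : ℝ)..1,
          (((ρ α * (M * M)).trace).re - (((ρ α * M).trace).re) ^ 2))
        = 1 / Iq - 1 / 12 :=
  global_optimal_observable_total_variance_general ρ₁ ρ₂ htr₁ htr₂ ρhalf hρhalf ρ hρ L hsld Iq hIq
    hIq0 M hM
end

section
/- Let n, m be natural numbers with 1 ≤ m ≤ n − 1, set D = 2ⁿ. Let v₁, v₂ ∈ ℂ^D be orthonormal vectors, r ∈ [0,1], and define ρ⁽¹⁾ = r·|v₁⟩⟨v₁| + (1−r)·|v₂⟩⟨v₂|, ρ_α = α·ρ⁽¹⁾ + ((1−α)/2ⁿ)·1. Let Λ be a D×D orthogonal projector of rank 2^{n−m} with Λv₁ = v₁ and Λv₂ = v₂, and define the observable M = Λ + (1/(1−2^m))·(1 − Λ). Then for every α ∈ ℝ: (a) Tr(ρ_α M) = α (unbiasedness); (b) Tr(ρ_α M²) − α² = (1−α)·(1/(2^m − 1) + α). -/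
/-! Write `M_d = Λ + d(1 − Λ)`. Since `Λ` fixes `v₁` and `v₂`, so does every `M_d`, hence
`Tr(ρ⁽¹⁾ M_d) = 1`; and `Tr M_d = k + d(D − k)` with `k = Tr Λ = rank Λ = 2^{n−m}`.
Idempotency of `Λ` gives `M_c² = M_{c²}`, so both moments of `M = M_c` reduce to these two traces,
and `c = 1/(1 − 2^m)` is exactly the value making `Tr M_c = 0`. -/

namespace Matrix

variable {ι R : Type*} [Fintype ι] [DecidableEq ι] [CommRing R]

theorem trace_eq_rank_of_isIdempotentElem_s15 {𝕜 : Type*} [Field 𝕜]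
    {P : Matrix ι ι 𝕜} (hP : IsIdempotentElem P) : P.trace = P.rank := by
  have hP' : IsIdempotentElem P.toLin' := hP.map toLinAlgEquiv'
  rw [← trace_toLin'_eq, (LinearMap.IsIdempotentElem.isProj_range _ hP').trace]
  rfl

omit [DecidableEq ι] in
theorem trace_vecMulVec_mul (v w : ι → R) (A : Matrix ι ι R) :
    (vecMulVec v w * A).trace = w ⬝ᵥ (A *ᵥ v) := by
  rw [vecMulVec_mul, trace_vecMulVec, dotProduct_comm, dotProduct_mulVec]

theorem add_smul_one_sub_mulVec_of_mulVec_eq {P : Matrix ι ι R} {v : ι → R} (hv : P *ᵥ v = v)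
    (d : R) : (P + d • (1 - P)) *ᵥ v = v := by
  rw [add_mulVec, smul_mulVec, sub_mulVec, one_mulVec, hv, sub_self, smul_zero, add_zero]

theorem add_smul_one_sub_mul_add_smul_one_sub {P : Matrix ι ι R} (hP : IsIdempotentElem P)
    (c d : R) : (P + c • (1 - P)) * (P + d • (1 - P)) = P + (c * d) • (1 - P) := by
  have hP₁ : P * (1 - P) = 0 := by rw [mul_sub, mul_one, hP.eq, sub_self]
  have h₁P : (1 - P) * P = 0 := by rw [sub_mul, one_mul, hP.eq, sub_self]
  rw [add_mul, mul_add, mul_add, smul_mul_assoc, smul_mul_assoc, mul_smul_comm, mul_smul_comm,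
    hP₁, h₁P, hP.eq, hP.one_sub.eq, smul_zero, smul_zero, add_zero, zero_add, smul_smul]

theorem trace_add_smul_one_sub (P : Matrix ι ι R) (d : R) :
    (P + d • (1 - P)).trace = P.trace + d * (Fintype.card ι - P.trace) := by
  rw [trace_add, trace_smul, trace_sub, trace_one, smul_eq_mul]

omit [DecidableEq ι] in
theorem trace_mixture_mul_eq_one_of_mulVec_eq [StarRing R]
    {v₁ v₂ : ι → R} (hv₁ : star v₁ ⬝ᵥ v₁ = 1) (hv₂ : star v₂ ⬝ᵥ v₂ = 1) {A : Matrix ι ι R}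
    (hA₁ : A *ᵥ v₁ = v₁) (hA₂ : A *ᵥ v₂ = v₂) (r : R) :
    ((r • vecMulVec v₁ (star v₁) + (1 - r) • vecMulVec v₂ (star v₂)) * A).trace = 1 := by
  rw [add_mul, smul_mul_assoc, smul_mul_assoc, trace_add, trace_smul, trace_smul,
    trace_vecMulVec_mul, trace_vecMulVec_mul, hA₁, hA₂, hv₁, hv₂, smul_eq_mul, smul_eq_mul,
    mul_one, mul_one, add_sub_cancel]

end Matrix

open Matrix

theorem m_qubit_observable_unbiased_and_variance_general
    {n m : ℕ} (hm : 1 ≤ m) (hmn : m ≤ n - 1)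
    (v₁ v₂ : Fin (2 ^ n) → ℂ)
    (hv₁ : star v₁ ⬝ᵥ v₁ = 1) (hv₂ : star v₂ ⬝ᵥ v₂ = 1)
    (r : ℝ)
    (ρ₁ : Matrix (Fin (2 ^ n)) (Fin (2 ^ n)) ℂ)
    (hρ₁ : ρ₁ = (r : ℂ) • vecMulVec v₁ (star v₁) + ((1 - r : ℝ) : ℂ) • vecMulVec v₂ (star v₂))
    (ρ : ℝ → Matrix (Fin (2 ^ n)) (Fin (2 ^ n)) ℂ)
    (hρ : ∀ α : ℝ, ρ α = (α : ℂ) • ρ₁ + (((1 - α) / 2 ^ n : ℝ) : ℂ) • (1 : Matrix (Fin (2 ^ n)) (Fin (2 ^ n)) ℂ))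
    (Λ : Matrix (Fin (2 ^ n)) (Fin (2 ^ n)) ℂ)
    (hidem : Λ * Λ = Λ)
    (hrank : Λ.rank = 2 ^ (n - m))
    (hΛ₁ : Λ *ᵥ v₁ = v₁) (hΛ₂ : Λ *ᵥ v₂ = v₂)
    (M : Matrix (Fin (2 ^ n)) (Fin (2 ^ n)) ℂ)
    (hM : M = Λ + ((1 / (1 - 2 ^ m) : ℝ) : ℂ) • ((1 : Matrix (Fin (2 ^ n)) (Fin (2 ^ n)) ℂ) - Λ)) :
    ∀ α : ℝ,
      (ρ α * M).trace = (α : ℂ) ∧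
      (ρ α * (M * M)).trace - ((α : ℂ)) ^ 2
        = (((1 - α) * (1 / (2 ^ m - 1) + α) : ℝ) : ℂ) := by
  intro α
  have htrace : ∀ d : ℝ, (ρ α * (Λ + (d : ℂ) • (1 - Λ))).trace
      = ((α + (1 - α) / 2 ^ n * (2 ^ (n - m) + d * (2 ^ n - 2 ^ (n - m))) : ℝ) : ℂ) := by
    intro d
    have hρ₁Λ : (ρ₁ * (Λ + (d : ℂ) • (1 - Λ))).trace = 1 := by
      rw [hρ₁, Complex.ofReal_sub, Complex.ofReal_one]
      exact trace_mixture_mul_eq_one_of_mulVec_eq hv₁ hv₂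
        (add_smul_one_sub_mulVec_of_mulVec_eq hΛ₁ _) (add_smul_one_sub_mulVec_of_mulVec_eq hΛ₂ _) _
    rw [hρ α, add_mul, smul_mul_assoc, smul_mul_assoc, one_mul, trace_add, trace_smul, trace_smul,
      hρ₁Λ, trace_add_smul_one_sub, trace_eq_rank_of_isIdempotentElem_s15 hidem, hrank]
    simp
  have hMM : M * M = Λ + ((1 / (1 - 2 ^ m) * (1 / (1 - 2 ^ m)) : ℝ) : ℂ) • (1 - Λ) := by
    rw [hM, add_smul_one_sub_mul_add_smul_one_sub hidem, Complex.ofReal_mul]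
  have h2m : (2 : ℝ) ^ m ≠ 1 := (one_lt_pow₀ one_lt_two (by omega)).ne'
  have h2n : (2 : ℝ) ^ n = 2 ^ (n - m) * 2 ^ m := by rw [← pow_add, Nat.sub_add_cancel (by omega)]
  constructor
  · rw [hM, htrace, Complex.ofReal_inj, h2n]
    field_simp
    ring
  · rw [hMM, htrace, ← Complex.ofReal_pow, ← Complex.ofReal_sub, Complex.ofReal_inj, h2n]
    field_simp
    ring

/-- The paper's optimal `m`-qubit-measurement observable `M = Λ + (1/(1−2^m))(1 − Λ)`,
built on a rank-`2^{n−m}` projector `Λ` fixing the eigenvectors of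
`ρ⁽¹⁾ = r|v₁⟩⟨v₁| + (1−r)|v₂⟩⟨v₂|`, is unbiased for the mixture
`ρ_α = αρ⁽¹⁾ + ((1−α)/2ⁿ)·1` and has variance `(1−α)(1/(2^m − 1) + α)`. -/
theorem m_qubit_observable_unbiased_and_variance
    {n m : ℕ} (hm : 1 ≤ m) (hmn : m ≤ n - 1)
    (v₁ v₂ : Fin (2 ^ n) → ℂ)
    (hv₁ : star v₁ ⬝ᵥ v₁ = 1) (hv₂ : star v₂ ⬝ᵥ v₂ = 1) (hv₁₂ : star v₁ ⬝ᵥ v₂ = 0)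
    (r : ℝ) (hr0 : 0 ≤ r) (hr1 : r ≤ 1)
    (ρ₁ : Matrix (Fin (2 ^ n)) (Fin (2 ^ n)) ℂ)
    (hρ₁ : ρ₁ = (r : ℂ) • vecMulVec v₁ (star v₁) + ((1 - r : ℝ) : ℂ) • vecMulVec v₂ (star v₂))
    (ρ : ℝ → Matrix (Fin (2 ^ n)) (Fin (2 ^ n)) ℂ)
    (hρ : ∀ α : ℝ, ρ α = (α : ℂ) • ρ₁ + (((1 - α) / 2 ^ n : ℝ) : ℂ) • (1 : Matrix (Fin (2 ^ n)) (Fin (2 ^ n)) ℂ))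
    (Λ : Matrix (Fin (2 ^ n)) (Fin (2 ^ n)) ℂ)
    (hherm : Λ.IsHermitian) (hidem : Λ * Λ = Λ)
    (hrank : Λ.rank = 2 ^ (n - m))
    (hΛ₁ : Λ *ᵥ v₁ = v₁) (hΛ₂ : Λ *ᵥ v₂ = v₂)
    (M : Matrix (Fin (2 ^ n)) (Fin (2 ^ n)) ℂ)
    (hM : M = Λ + ((1 / (1 - 2 ^ m) : ℝ) : ℂ) • ((1 : Matrix (Fin (2 ^ n)) (Fin (2 ^ n)) ℂ) - Λ)) :
    ∀ α : ℝ,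
      (ρ α * M).trace = (α : ℂ) ∧
      (ρ α * (M * M)).trace - ((α : ℂ)) ^ 2
        = (((1 - α) * (1 / (2 ^ m - 1) + α) : ℝ) : ℂ) :=
  m_qubit_observable_unbiased_and_variance_general hm hmn v₁ v₂ hv₁ hv₂ r ρ₁ hρ₁ ρ hρ Λ hidem hrank
    hΛ₁ hΛ₂ M hM
end

section
/- Let n ≥ 1, D = 2ⁿ, let (v_i)_{i=1}^D be an orthonormal basis of ℂ^D, let r ∈ [0,1], and define ρ⁽¹⁾ = r·|v₁⟩⟨v₁| + (1−r)·|v₂⟩⟨v₂|, ρ⁽²⁾ = (1/2ⁿ)·1, ρ_α = α·ρ⁽¹⁾ + (1−α)·ρ⁽²⁾. Set I_q = 4 − 8(r−1)/(2ⁿ(r−1) − 1) − 8r/(2ⁿ r + 1), and assume I_q ≠ 0. Define M = Σ_{i=1}^D λ_i |v_i⟩⟨v_i| with λ₁ = 1/2 + (2/I_q)·(r − 2^{−n})/(r + 2^{−n}), λ₂ = 1/2 + (2/I_q)·((1−r) − 2^{−n})/((1−r) + 2^{−n}), and λ_i = 1/2 − 2/I_q for i ≥ 3. Set A = (1−2r)²,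 B = 1 − 2ⁿ + 2ⁿ(2ⁿ − 4)(r−1)r, C = r(r−1), and assume B ≠ 0. Then for every α ∈ ℝ: (a) Tr(ρ_α M) = α (unbiasedness); (b) Tr(ρ_α M²) − α² = (1−α)α + (2α−1)(1 − 2ⁿA)A/B² + ( 2(2 + 2ⁿ)C − α(1 + 2(4 + 2ⁿ)C) )/B. -/
/-!
Every matrix involved is diagonal in the orthonormal basis `(v i)`, so both traces are weighted
sums of the eigenvalues `λ i` (resp. `λ i ^ 2`): the weights are `α r` and `α (1 - r)` on `v 0`,
`v 1` from `ρ⁽¹⁾`, plus `(1 - α) / 2ⁿ` on every basis vector from the maximally mixed state.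
As all `λ i` with `i ≠ 0, 1` coincide, these sums involve only three values, and after the
closed form `I_q = -4B / ((2ⁿ r + 1) (2ⁿ (1 - r) + 1))` both claims become rational identities
in `2ⁿ`, `r` and `α`.
-/

open Matrix

namespace Matrix

variable {ι n R : Type*} [Fintype ι] [DecidableEq ι] [Fintype n] [CommSemiring R] [Star R]

def spectralSum (v : ι → n → R) (c : ι → R) : Matrix n n R :=
  ∑ i, c i • vecMulVec (v i) (star (v i))

section Orthonormal

variable {v : ι → n → R} (hv : ∀ i j, star (v i) ⬝ᵥ v j = if i = j then 1 else 0)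
include hv

theorem vecMulVec_mul_spectralSum (j : ι) (c : ι → R) :
    vecMulVec (v j) (star (v j)) * spectralSum v c = c j • vecMulVec (v j) (star (v j)) := by
  rw [spectralSum, Finset.mul_sum, Fintype.sum_eq_single j fun i hi => ?_] <;>
    rw [mul_smul_comm, vecMulVec_mul_vecMulVec, hv]
  · rw [if_pos rfl, one_smul]
  · rw [if_neg (Ne.symm hi), zero_smul, vecMulVec_zero, smul_zero]

theorem spectralSum_mul_spectralSum (a b : ι → R) :
    spectralSum v a * spectralSum v b = spectralSum v (a * b) := by
  rw [spectralSum, Finset.sum_mul]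
  simp_rw [smul_mul_assoc, vecMulVec_mul_spectralSum hv, smul_smul]
  rfl

theorem trace_spectralSum (c : ι → R) : (spectralSum v c).trace = ∑ i, c i := by
  simp [spectralSum, trace_sum, dotProduct_comm (v _), hv]

theorem trace_vecMulVec_mul_spectralSum (j : ι) (c : ι → R) :
    (vecMulVec (v j) (star (v j)) * spectralSum v c).trace = c j := by
  simp [vecMulVec_mul_spectralSum hv, dotProduct_comm (v _), hv]

theorem trace_mixture_mul_spectralSum [DecidableEq n] (a b s : R) (i j : ι) (c : ι → R) :
    ((a • vecMulVec (v i) (star (v i)) + b • vecMulVec (v j) (star (v j)) + s • 1)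
        * spectralSum v c).trace = a * c i + b * c j + s * ∑ k, c k := by
  simp only [add_mul, smul_mul_assoc, Matrix.one_mul, trace_add, trace_smul, smul_eq_mul,
    trace_vecMulVec_mul_spectralSum hv, trace_spectralSum hv]

end Orthonormal

end Matrix

theorem Fintype.sum_eq_card_nsmul_add_sub_add_sub {ι M : Type*} [Fintype ι] [AddCommGroup M]
    {f : ι → M} {c : M} {i j : ι} (hij : i ≠ j) (hf : ∀ x, x ≠ i → x ≠ j → f x = c) :
    ∑ x, f x = Fintype.card ι • c + (f i - c) + (f j - c) := by
  have hdev : ∑ x, (f x - c) = (f i - c) + (f j - c) :=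
    Fintype.sum_eq_add i j hij fun x hx => by rw [hf x hx.1 hx.2, sub_self]
  rw [Finset.sum_sub_distrib, Finset.sum_const, Finset.card_univ] at hdev
  rw [add_assoc, ← hdev]
  abel

section OptimalEigenvalues

variable {d r B : ℝ}

theorem quantumFisherInfo_eq {Iq : ℝ}
    (hIq : Iq = 4 - 8 * (r - 1) / (d * (r - 1) - 1) - 8 * r / (d * r + 1))
    (hB : B = 1 - d + d * (d - 4) * (r - 1) * r) (hp : d * r + 1 ≠ 0) (hq : d * (1 - r) + 1 ≠ 0) :
    Iq = -4 * B / ((d * r + 1) * (d * (1 - r) + 1)) := by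
  have hq' : d * (r - 1) - 1 ≠ 0 := by contrapose! hq; linear_combination -hq
  rw [hIq, sub_sub, div_add_div _ _ hq' hp, sub_div' (mul_ne_zero hq' hp),
    div_eq_div_iff (mul_ne_zero hq' hp) (mul_ne_zero hp hq), hB]
  ring

theorem sub_one_div_div_add_one_div {s : ℝ} (hd : d ≠ 0) :
    (s - 1 / d) / (s + 1 / d) = (d * s - 1) / (d * s + 1) := by
  rw [← mul_div_mul_left _ _ hd, mul_sub, mul_add, mul_one_div_cancel hd]

theorem optimal_eigenvalue_eq {Iq s t : ℝ} (hIq : Iq = -4 * B / ((d * s + 1) * (d * t + 1)))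
    (hd : d ≠ 0) (hs : d * s + 1 ≠ 0) :
    1 / 2 + 2 / Iq * ((s - 1 / d) / (s + 1 / d))
      = 1 / 2 - (d * s - 1) * (d * t + 1) / (2 * B) := by
  rw [hIq, sub_one_div_div_add_one_div hd]
  field_simp
  ring

theorem optimal_observable_moments_of_closed_form {A C l₀ l₁ k : ℝ} (α : ℝ) (hd : d ≠ 0)
    (hB : B = 1 - d + d * (d - 4) * (r - 1) * r) (hB0 : B ≠ 0)
    (hA : A = (1 - 2 * r) ^ 2) (hC : C = r * (r - 1))
    (hl₀ : l₀ = 1 / 2 - (d * r - 1) * (d * (1 - r) + 1) / (2 * B))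
    (hl₁ : l₁ = 1 / 2 - (d * (1 - r) - 1) * (d * r + 1) / (2 * B))
    (hk : k = 1 / 2 + (d * r + 1) * (d * (1 - r) + 1) / (2 * B)) :
    α * r * l₀ + α * (1 - r) * l₁ + (1 - α) / d * (d * k + (l₀ - k) + (l₁ - k)) = α ∧
    α * r * l₀ ^ 2 + α * (1 - r) * l₁ ^ 2
        + (1 - α) / d * (d * k ^ 2 + (l₀ ^ 2 - k ^ 2) + (l₁ ^ 2 - k ^ 2)) - α ^ 2
      = (1 - α) * α + (2 * α - 1) * (1 - d * A) * A / B ^ 2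
          + (2 * (2 + d) * C - α * (1 + 2 * (4 + d) * C)) / B := by
  subst hA hC hl₀ hl₁ hk
  constructor <;>
  · -- `B` stays an atom while clearing denominators, so that `hB0` applies
    field_simp
    subst hB
    ring

theorem optimal_observable_moments {Iq A C l₀ l₁ k : ℝ} (α : ℝ) (hd : 0 < d) (hr0 : 0 ≤ r)
    (hr1 : r ≤ 1) (hIq : Iq = 4 - 8 * (r - 1) / (d * (r - 1) - 1) - 8 * r / (d * r + 1))
    (hB : B = 1 - d + d * (d - 4) * (r - 1) * r) (hB0 : B ≠ 0)
    (hA : A = (1 - 2 * r) ^ 2) (hC : C = r * (r - 1))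
    (hl₀ : l₀ = 1 / 2 + (2 / Iq) * ((r - 1 / d) / (r + 1 / d)))
    (hl₁ : l₁ = 1 / 2 + (2 / Iq) * (((1 - r) - 1 / d) / ((1 - r) + 1 / d)))
    (hk : k = 1 / 2 - 2 / Iq) :
    α * r * l₀ + α * (1 - r) * l₁ + (1 - α) / d * (d * k + (l₀ - k) + (l₁ - k)) = α ∧
    α * r * l₀ ^ 2 + α * (1 - r) * l₁ ^ 2
        + (1 - α) / d * (d * k ^ 2 + (l₀ ^ 2 - k ^ 2) + (l₁ ^ 2 - k ^ 2)) - α ^ 2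
      = (1 - α) * α + (2 * α - 1) * (1 - d * A) * A / B ^ 2
          + (2 * (2 + d) * C - α * (1 + 2 * (4 + d) * C)) / B := by
  have hp : 0 < d * r + 1 := by positivity
  have hq : 0 < d * (1 - r) + 1 := by have := sub_nonneg.2 hr1; positivity
  have hIq' := quantumFisherInfo_eq hIq hB hp.ne' hq.ne'
  refine optimal_observable_moments_of_closed_form α hd.ne' hB hB0 hA hC ?_ ?_ ?_
  · rw [hl₀, optimal_eigenvalue_eq hIq' hd.ne' hp.ne']
  · rw [hl₁, optimal_eigenvalue_eq (t := r) (by rw [hIq', mul_comm (d * r + 1)]) hd.ne' hq.ne']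
  · rw [hk, hIq', div_div_eq_mul_div]
    ring

end OptimalEigenvalues

theorem full_measurement_observable_unbiased_and_variance_general
    {n : ℕ} (hn : 1 ≤ n)
    (v : Fin (2 ^ n) → (Fin (2 ^ n) → ℂ))
    (hv : ∀ i j, star (v i) ⬝ᵥ v j = if i = j then 1 else 0)
    (r : ℝ) (hr0 : 0 ≤ r) (hr1 : r ≤ 1)
    (ρ₁ ρ₂ : Matrix (Fin (2 ^ n)) (Fin (2 ^ n)) ℂ)
    (hρ₁ : ρ₁ = (r : ℂ) • vecMulVec (v 0) (star (v 0))
        + ((1 - r : ℝ) : ℂ) • vecMulVec (v 1) (star (v 1)))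
    (hρ₂ : ρ₂ = ((1 / 2 ^ n : ℝ) : ℂ) • (1 : Matrix (Fin (2 ^ n)) (Fin (2 ^ n)) ℂ))
    (ρ : ℝ → Matrix (Fin (2 ^ n)) (Fin (2 ^ n)) ℂ)
    (hρ : ∀ α : ℝ, ρ α = (α : ℂ) • ρ₁ + ((1 - α : ℝ) : ℂ) • ρ₂)
    (Iq : ℝ)
    (hIq : Iq = 4 - 8 * (r - 1) / (2 ^ n * (r - 1) - 1) - 8 * r / (2 ^ n * r + 1))
    (lam : Fin (2 ^ n) → ℝ)
    (hlam₁ : lam 0 = 1 / 2 + (2 / Iq) * ((r - 1 / 2 ^ n) / (r + 1 / 2 ^ n)))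
    (hlam₂ : lam 1 = 1 / 2 + (2 / Iq) * (((1 - r) - 1 / 2 ^ n) / ((1 - r) + 1 / 2 ^ n)))
    (hlam : ∀ i : Fin (2 ^ n), i ≠ 0 → i ≠ 1 → lam i = 1 / 2 - 2 / Iq)
    (M : Matrix (Fin (2 ^ n)) (Fin (2 ^ n)) ℂ)
    (hM : M = ∑ i, (lam i : ℂ) • vecMulVec (v i) (star (v i)))
    (A B C : ℝ)
    (hA : A = (1 - 2 * r) ^ 2)
    (hB : B = 1 - 2 ^ n + 2 ^ n * (2 ^ n - 4) * (r - 1) * r) (hB0 : B ≠ 0)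
    (hC : C = r * (r - 1)) :
    ∀ α : ℝ,
      (ρ α * M).trace = (α : ℂ) ∧
      (ρ α * (M * M)).trace - ((α : ℂ)) ^ 2
        = (((1 - α) * α + (2 * α - 1) * (1 - 2 ^ n * A) * A / B ^ 2
            + (2 * (2 + 2 ^ n) * C - α * (1 + 2 * (4 + 2 ^ n) * C)) / B : ℝ) : ℂ) := by
  intro α
  obtain ⟨hmean, hvar⟩ := optimal_observable_moments α (by positivity) hr0 hr1 hIq hB hB0 hA hC
    hlam₁ hlam₂ rfl
  have h01 : (0 : Fin (2 ^ n)) ≠ 1 := by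
    simp [Fin.ext_iff, Nat.mod_eq_of_lt (Nat.one_lt_two_pow (n := n) (by omega))]
  have hsum := Fintype.sum_eq_card_nsmul_add_sub_add_sub h01 hlam
  have hsum_sq := Fintype.sum_eq_card_nsmul_add_sub_add_sub (f := fun i => lam i ^ 2) h01
    fun i hi₀ hi₁ => by rw [hlam i hi₀ hi₁]
  have hρα : ρ α = ((α * r : ℝ) : ℂ) • vecMulVec (v 0) (star (v 0))
      + ((α * (1 - r) : ℝ) : ℂ) • vecMulVec (v 1) (star (v 1)) + (((1 - α) / 2 ^ n : ℝ) : ℂ) • 1 := by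
    rw [hρ, hρ₁, hρ₂]; push_cast; module
  have hM' : M = spectralSum v (fun i => (lam i : ℂ)) := hM
  have hMM : M * M = spectralSum v (fun i => ((lam i ^ 2 : ℝ) : ℂ)) := by
    rw [hM', spectralSum_mul_spectralSum hv]; congr 1; ext i; simp [sq]
  constructor
  · rw [hρα, hM', trace_mixture_mul_spectralSum hv, ← Complex.ofReal_sum, hsum,
      Fintype.card_fin, nsmul_eq_mul, Nat.cast_pow, Nat.cast_ofNat]
    exact_mod_cast hmean
  · rw [hρα, hMM, trace_mixture_mul_spectralSum hv, ← Complex.ofReal_sum, hsum_sq,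
      Fintype.card_fin, nsmul_eq_mul, Nat.cast_pow, Nat.cast_ofNat]
    exact_mod_cast hvar

/-- The paper's globally optimal full-measurement observable (Eq. lambdas_opt_n) for the
mixture `ρ_α = αρ⁽¹⁾ + (1−α)·2^{−n}·1` with `ρ⁽¹⁾ = r|v₁⟩⟨v₁| + (1−r)|v₂⟩⟨v₂|` is unbiased
and has the variance given in Eq. (obs_opt-n). -/
theorem full_measurement_observable_unbiased_and_variance
    {n : ℕ} (hn : 1 ≤ n)
    (v : Fin (2 ^ n) → (Fin (2 ^ n) → ℂ))
    (hv : ∀ i j, star (v i) ⬝ᵥ v j = if i = j then 1 else 0)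
    (r : ℝ) (hr0 : 0 ≤ r) (hr1 : r ≤ 1)
    (ρ₁ ρ₂ : Matrix (Fin (2 ^ n)) (Fin (2 ^ n)) ℂ)
    (hρ₁ : ρ₁ = (r : ℂ) • vecMulVec (v 0) (star (v 0))
        + ((1 - r : ℝ) : ℂ) • vecMulVec (v 1) (star (v 1)))
    (hρ₂ : ρ₂ = ((1 / 2 ^ n : ℝ) : ℂ) • (1 : Matrix (Fin (2 ^ n)) (Fin (2 ^ n)) ℂ))
    (ρ : ℝ → Matrix (Fin (2 ^ n)) (Fin (2 ^ n)) ℂ)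
    (hρ : ∀ α : ℝ, ρ α = (α : ℂ) • ρ₁ + ((1 - α : ℝ) : ℂ) • ρ₂)
    (Iq : ℝ)
    (hIq : Iq = 4 - 8 * (r - 1) / (2 ^ n * (r - 1) - 1) - 8 * r / (2 ^ n * r + 1))
    (hIq0 : Iq ≠ 0)
    (lam : Fin (2 ^ n) → ℝ)
    (hlam₁ : lam 0 = 1 / 2 + (2 / Iq) * ((r - 1 / 2 ^ n) / (r + 1 / 2 ^ n)))
    (hlam₂ : lam 1 = 1 / 2 + (2 / Iq) * (((1 - r) - 1 / 2 ^ n) / ((1 - r) + 1 / 2 ^ n)))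
    (hlam : ∀ i : Fin (2 ^ n), i ≠ 0 → i ≠ 1 → lam i = 1 / 2 - 2 / Iq)
    (M : Matrix (Fin (2 ^ n)) (Fin (2 ^ n)) ℂ)
    (hM : M = ∑ i, (lam i : ℂ) • vecMulVec (v i) (star (v i)))
    (A B C : ℝ)
    (hA : A = (1 - 2 * r) ^ 2)
    (hB : B = 1 - 2 ^ n + 2 ^ n * (2 ^ n - 4) * (r - 1) * r) (hB0 : B ≠ 0)
    (hC : C = r * (r - 1)) :
    ∀ α : ℝ,
      (ρ α * M).trace = (α : ℂ) ∧
      (ρ α * (M * M)).trace - ((α : ℂ)) ^ 2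
        = (((1 - α) * α + (2 * α - 1) * (1 - 2 ^ n * A) * A / B ^ 2
            + (2 * (2 + 2 ^ n) * C - α * (1 + 2 * (4 + 2 ^ n) * C)) / B : ℝ) : ℂ) :=
  full_measurement_observable_unbiased_and_variance_general hn v hv r hr0 hr1 ρ₁ ρ₂ hρ₁ hρ₂ ρ hρ Iq
    hIq lam hlam₁ hlam₂ hlam M hM A B C hA hB hB0 hC
end
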